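/- Let a₀ a₃ < 0, a₂ ≠ 0, a₃ ≠ 0, 24 a₁ a₃ ≠ 1, and T* = −1/(12 a₀ a₃) > 0. With P and c as above, suppose c ≠ 0 or P(x,y) ≠ 0. Then |u(x,y,t)| → ∞ as t ↗ T*, where u(x,y,t) = a₀/(1 + 12 a₀ a₃ t) P(x,y) − c ln(1 + 12 a₀ a₃ t) + a₄ x + a₅ y + a₆. -/

import Mathlib

noncomputable section

/-- The quartic spatial profile `P(x,y)` of the general non-radial family. -/
def P (a₁ a₂ a₃ x y : ℝ) : ℝ :=
  (3456 * a₁ ^ 3 * a₃ ^ 3 + 432 * a₁ ^ 2 * a₃ ^ 2 - 1) / (46656 * a₂ ^ 2 * a₃ ^ 3) * x ^ 4 +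
    a₁ * x ^ 2 * y ^ 2 + a₂ * x * y ^ 3 +
    (288 * a₁ ^ 3 * a₃ ^ 2 + 12 * a₁ * a₃ - 1) / (648 * a₂ * a₃ ^ 2) * x ^ 3 * y +
    9 * a₂ ^ 4 * a₃ / (24 * a₁ * a₃ - 1) * y ^ 4

/-- The logarithmic coefficient `c` of the general non-radial family. -/
def C (a₁ a₂ a₃ : ℝ) : ℝ :=
  1 / (12 * a₃) *
    (4 * a₁ + (3456 * a₁ ^ 3 * a₃ ^ 3 + 432 * a₁ ^ 2 * a₃ ^ 2 - 1) / (1944 * a₂ ^ 2 * a₃ ^ 3) +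
      216 * a₂ ^ 2 * a₃ / (24 * a₁ * a₃ - 1))

/-- The general non-radial family of explicit solutions. -/
def U (a₀ a₁ a₂ a₃ a₄ a₅ a₆ x y t : ℝ) : ℝ :=
  a₀ / (1 + 12 * a₀ * a₃ * t) * P a₁ a₂ a₃ x y -
    C a₁ a₂ a₃ * Real.log (1 + 12 * a₀ * a₃ * t) + a₄ * x + a₅ * y + a₆

/-! Substituting `s = 1 + 12 a₀ a₃ t`, which decreases to `0⁺` as `t ↗ T*`, turns `u` into
`a₀ P / s - c log s + const`: the pole `a₀ P / s` dominates when `P ≠ 0`, and otherwise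
`c log s → ∓∞`. -/

open Filter Real Set Topology

theorem tendsto_one_add_mul_nhdsLT_neg_inv {k : ℝ} (hk : k < 0) :
    Tendsto (fun t => 1 + k * t) (𝓝[<] (-1 / k)) (𝓝[>] 0) := by
  refine tendsto_nhdsWithin_of_tendsto_nhds_of_eventually_within _ ?_ ?_
  · have hlim : 1 + k * (-1 / k) = 0 := by field_simp [hk.ne]; ring
    have hcont : Continuous fun t : ℝ => 1 + k * t := by fun_prop
    simpa only [hlim] using (hcont.tendsto (-1 / k)).mono_left nhdsWithin_le_nhds
  · filter_upwards [self_mem_nhdsWithin] with t (ht : t < -1 / k)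
    have : -1 < t * k := (lt_div_iff_of_neg hk).mp ht
    simp only [mem_Ioi]
    linarith

theorem tendsto_abs_mul_log_add_nhdsGT_zero {c : ℝ} (hc : c ≠ 0) (L : ℝ) :
    Tendsto (fun s => |c * log s + L|) (𝓝[>] 0) atTop := by
  rcases hc.lt_or_gt with hneg | hpos
  · exact tendsto_abs_atTop_atTop.comp <| tendsto_atTop_add_const_right _ L <|
      tendsto_log_nhdsGT_zero.const_mul_atBot_of_neg hneg
  · exact tendsto_abs_atBot_atTop.comp <| tendsto_atBot_add_const_right _ L <|
      tendsto_log_nhdsGT_zero.const_mul_atBot hpos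

theorem tendsto_abs_div_add_mul_log_add_nhdsGT_zero {A : ℝ} (hA : A ≠ 0) (c L : ℝ) :
    Tendsto (fun s => |A / s + c * log s + L|) (𝓝[>] 0) atTop := by
  -- Factor out `s⁻¹`: the remaining factor tends to `|A| > 0` since `s log s → 0`.
  have hmul_log : Tendsto (fun s => s * log s) (𝓝[>] 0) (𝓝 0) := by
    simpa using (continuous_mul_log.tendsto 0).mono_left nhdsWithin_le_nhds
  have hid : Tendsto (fun s : ℝ => s) (𝓝[>] 0) (𝓝 0) :=
    tendsto_nhdsWithin_of_tendsto_nhds tendsto_id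
  have hrest : Tendsto (fun s => |A + c * (s * log s) + s * L|) (𝓝[>] 0) (𝓝 |A|) := by
    simpa using ((tendsto_const_nhds.add (hmul_log.const_mul c)).add (hid.mul_const L)).abs
  refine (tendsto_inv_nhdsGT_zero.atTop_mul_pos (abs_pos.mpr hA) hrest).congr' ?_
  filter_upwards [self_mem_nhdsWithin] with s (hs : 0 < s)
  rw [← abs_of_pos (inv_pos.mpr hs), ← abs_mul]
  congr 1
  field_simp

theorem tendsto_abs_div_sub_mul_log_add_nhdsGT_zero {A c : ℝ} (h : A ≠ 0 ∨ c ≠ 0)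
    (L : ℝ) : Tendsto (fun s => |A / s - c * log s + L|) (𝓝[>] 0) atTop := by
  simp only [sub_eq_add_neg, ← neg_mul]
  rcases eq_or_ne A 0 with rfl | hA
  · have hc : -c ≠ 0 := neg_ne_zero.mpr (h.resolve_left (by simp))
    simpa using tendsto_abs_mul_log_add_nhdsGT_zero hc L
  · exact tendsto_abs_div_add_mul_log_add_nhdsGT_zero hA (-c) L

theorem stmt16_general (a₀ a₁ a₂ a₃ a₄ a₅ a₆ x y : ℝ)
    (h₀₃ : a₀ * a₃ < 0)
    (h : C a₁ a₂ a₃ ≠ 0 ∨ P a₁ a₂ a₃ x y ≠ 0) :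
    Filter.Tendsto (fun t => |U a₀ a₁ a₂ a₃ a₄ a₅ a₆ x y t|)
      (nhdsWithin (-1 / (12 * a₀ * a₃)) (Set.Iio (-1 / (12 * a₀ * a₃)))) Filter.atTop := by
  have hk : 12 * a₀ * a₃ < 0 := by linarith
  have ha₀ : a₀ ≠ 0 := by rintro rfl; simp at h₀₃
  have hcoef : a₀ * P a₁ a₂ a₃ x y ≠ 0 ∨ C a₁ a₂ a₃ ≠ 0 :=
    h.symm.imp_left (mul_ne_zero ha₀)
  refine ((tendsto_abs_div_sub_mul_log_add_nhdsGT_zero hcoef (a₄ * x + a₅ * y + a₆)).comp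
    (tendsto_one_add_mul_nhdsLT_neg_inv hk)).congr fun t => ?_
  simp only [Function.comp, U]
  congr 1
  ring

/-- If `a₀a₃ < 0` (so that `T* = −1/(12a₀a₃) > 0`) and either `c ≠ 0` or `P(x,y) ≠ 0`,
then `|u(x,y,t)| → ∞` as `t ↗ T*`. -/
theorem stmt16 (a₀ a₁ a₂ a₃ a₄ a₅ a₆ x y : ℝ)
    (h₀₃ : a₀ * a₃ < 0) (h₂ : a₂ ≠ 0) (h₃ : a₃ ≠ 0) (h₁₃ : 24 * a₁ * a₃ ≠ 1)
    (h : C a₁ a₂ a₃ ≠ 0 ∨ P a₁ a₂ a₃ x y ≠ 0) :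
    Filter.Tendsto (fun t => |U a₀ a₁ a₂ a₃ a₄ a₅ a₆ x y t|)
      (nhdsWithin (-1 / (12 * a₀ * a₃)) (Set.Iio (-1 / (12 * a₀ * a₃)))) Filter.atTop :=
  stmt16_general a₀ a₁ a₂ a₃ a₄ a₅ a₆ x y h₀₃ h
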